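/- arXiv:2502.06058 — 3 statements merged into one kernel-verified Lean document; each statement's English description precedes it below -/
import Mathlib

section
/- Let C be an [n,k] binary linear code with parity-check matrix H (an (n-k)×n matrix over F_2 whose kernel is C, with rank n-k). Let X' be uniform on C and V an independent random vector in F_2^n. Then the KL divergence D(P_{X'+V} || U_{F_2^n}) equals D(P_{HV} || U_{F_2^{n-k}}), where U_S denotes the uniform distribution on S. -/
/-!
The coset `v - C` is exactly the fiber of `H` over `H v`, so `P_{X'+V}(v) = P_{HV}(H v) / 2^k`;
likewise the uniform density `2^{-n}` on `F_2^n` is `2^{-(n-k)} / 2^k`. Both arguments of the left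
divergence are therefore pull-backs along the surjection `H`, divided by the common fiber size
`2^k`, of the arguments of the right one, and such a pull-back leaves the divergence unchanged.
-/

noncomputable def KLdiv {α : Type*} [Fintype α] (P Q : α → ℝ) : ℝ :=
  ∑ x, P x * Real.logb 2 (P x / Q x)

open Finset

section Fibers

variable {G G' F : Type*} [AddGroup G] [AddGroup G'] [FunLike F G G'] [AddMonoidHomClass F G G']

def kerEquivFiber (f : F) (v : G) : {c // f c = 0} ≃ {w // f w = f v} :=
  (Equiv.subLeft v).subtypeEquiv fun c => by simp [map_sub]

theorem sum_ker_sub_eq_sum_fiber [Fintype G] [DecidableEq G'] {M : Type*} [AddCommMonoid M]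
    (f : F) (p : G → M) (v : G) :
    ∑ c : {c // f c = 0}, p (v - c) = ∑ w, if f w = f v then p w else 0 := by
  rw [Fintype.sum_equiv (kerEquivFiber f v) (fun c => p (v - c)) (fun w => p w) fun _ => rfl,
    ← sum_filter]
  exact (sum_subtype _ (fun _ => by simp) p).symm

theorem card_fiber_eq_card_ker {f : F} (hf : Function.Surjective f) (u : G') :
    Nat.card {w // f w = u} = Nat.card {c // f c = 0} := by
  obtain ⟨v, rfl⟩ := hf u
  exact Nat.card_congr (kerEquivFiber f v).symm

end Fibers

theorem Fintype.sum_comp_eq_nsmul_of_card_fiber {α β M : Type*} [Fintype α] [Fintype β]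
    [AddCommMonoid M] {f : α → β} {m : ℕ} (hf : ∀ b, Nat.card {a // f a = b} = m) (g : β → M) :
    ∑ a, g (f a) = m • ∑ b, g b := by
  classical
  rw [← Fintype.sum_fiberwise' f g, smul_sum]
  refine Fintype.sum_congr _ _ fun b => ?_
  rw [sum_const, card_univ, Fintype.card_eq_nat_card, hf]

theorem KLdiv_comp_div_of_card_fiber {α β : Type*} [Fintype α] [Fintype β] {f : α → β} {m : ℕ}
    (hm : m ≠ 0) (hf : ∀ b, Nat.card {a // f a = b} = m) (P Q : β → ℝ) :
    KLdiv (fun a => P (f a) / m) (fun a => Q (f a) / m) = KLdiv P Q := by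
  have hm' : (m : ℝ) ≠ 0 := Nat.cast_ne_zero.mpr hm
  simp only [KLdiv, div_div_div_cancel_right₀ hm']
  rw [Fintype.sum_comp_eq_nsmul_of_card_fiber hf (fun b => P b / m * Real.logb 2 (P b / Q b)),
    nsmul_eq_mul, mul_sum]
  refine sum_congr rfl fun b _ => ?_
  field_simp

theorem stmt_2_general (n k : ℕ) (hk : k ≤ n)
    (H : Matrix (Fin (n - k)) (Fin n) (ZMod 2))
    (hrank : Function.Surjective H.mulVec)
    (hdim : Fintype.card {c : Fin n → ZMod 2 // H.mulVec c = 0} = 2 ^ k)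
    (pV : (Fin n → ZMod 2) → ℝ) :
    KLdiv (fun v => ∑ c : {c : Fin n → ZMod 2 // H.mulVec c = 0},
        (1 / (2 ^ k : ℝ)) * pV (v - c.1))
      (fun _ => (1 : ℝ) / 2 ^ n)
      = KLdiv (fun u => ∑ v, if H.mulVec v = u then pV v else 0)
        (fun _ => (1 : ℝ) / 2 ^ (n - k)) := by
  have hfiber : ∀ u, Nat.card {v // H.mulVec v = u} = 2 ^ k := fun u => by
    rw [← hdim, Fintype.card_eq_nat_card]
    exact card_fiber_eq_card_ker (f := H.mulVecLin) hrank u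
  have hP : (fun v => ∑ c : {c // H.mulVec c = 0}, 1 / (2 ^ k : ℝ) * pV (v - c.1)) =
      fun v => (∑ w, if H.mulVec w = H.mulVec v then pV w else 0) / (2 ^ k : ℕ) := by
    ext v
    rw [← mul_sum, one_div_mul_eq_div, Nat.cast_pow, Nat.cast_ofNat]
    exact congrArg (· / _) (sum_ker_sub_eq_sum_fiber H.mulVecLin pV v)
  have hQ : (1 : ℝ) / 2 ^ n = 1 / 2 ^ (n - k) / (2 ^ k : ℕ) := by
    rw [Nat.cast_pow, Nat.cast_ofNat, div_div, ← pow_add, Nat.sub_add_cancel hk]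
  rw [hP, hQ]
  exact KLdiv_comp_div_of_card_fiber (pow_ne_zero k two_ne_zero) hfiber
    (fun u => ∑ v, if H.mulVec v = u then pV v else 0) fun _ => 1 / 2 ^ (n - k)

/-- For an `[n,k]` binary linear code `C = ker H` with full-rank parity-check matrix `H`,
`X'` uniform on `C` and `V` independent noise,
`D(P_{X'+V} ‖ U_{F_2^n}) = D(P_{HV} ‖ U_{F_2^{n-k}})`. -/
theorem stmt_2 (n k : ℕ) (hk : k ≤ n)
    (H : Matrix (Fin (n - k)) (Fin n) (ZMod 2))
    (hrank : Function.Surjective H.mulVec)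
    (hdim : Fintype.card {c : Fin n → ZMod 2 // H.mulVec c = 0} = 2 ^ k)
    (pV : (Fin n → ZMod 2) → ℝ) (hV0 : ∀ v, 0 ≤ pV v) (hV1 : ∑ v, pV v = 1) :
    KLdiv (fun v => ∑ c : {c : Fin n → ZMod 2 // H.mulVec c = 0},
        (1 / (2 ^ k : ℝ)) * pV (v - c.1))
      (fun _ => (1 : ℝ) / 2 ^ n)
      = KLdiv (fun u => ∑ v, if H.mulVec v = u then pV v else 0)
        (fun _ => (1 : ℝ) / 2 ^ (n - k)) :=
  stmt_2_general n k hk H hrank hdim pV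
end

section
/- For a binomial distribution: if y is a vector of n i.i.d. Bernoulli(w/n) bits with 1 ≤ w ≤ n-1, then Pr(|y| = w) = C(n,w)(w/n)^w (1 - w/n)^{n-w} ≥ sqrt(n / (8 w (n-w))), where |y| is the Hamming weight. -/
/-!
Counting the `C(n, w)` bit vectors of weight `w` gives the closed form. For the bound write
`n! = s_n √(2n) (n/e)^n` with `s_n = Stirling.stirlingSeq n`; then
`C(a+b, a) (a/(a+b))^a (b/(a+b))^b = s_{a+b} / (s_a s_b) · √((a+b)/(2ab))`, so it suffices that
`s_a s_b ≤ 2 s_{a+b}`. This follows from `√π ≤ s_n ≤ √π e^{1/(12n)}` once `a + b ≥ 4`;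
the three remaining pairs `(a, b)` are checked by hand, `(1, 1)` being an equality case.
-/

open Finset Real Stirling Filter Topology

theorem card_filter_card_filter_eq_one {ι : Type*} [Fintype ι] [DecidableEq ι] (k : ℕ) :
    #{y : ι → ZMod 2 | #{i | y i = 1} = k} = (Fintype.card ι).choose k := by
  rw [← card_univ, ← card_powersetCard]
  refine card_nbij' (fun y => ({i | y i = 1} : Finset ι)) (fun s i => if i ∈ s then 1 else 0)
    (fun y hy => by simpa using hy) (fun s hs => by simp_all) (fun y _ => ?_) (fun s _ => ?_)
  · funext i
    by_cases h : y i = 1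
    · simp [h]
    · simpa [h] using ((by decide : ∀ z : ZMod 2, z ≠ 1 → z = 0) _ h).symm
  · ext i
    by_cases h : i ∈ s <;> simp [h]

theorem prod_ite_eq_pow_mul_pow {ι M : Type*} [Fintype ι] [CommMonoid M] (p : ι → Prop)
    [DecidablePred p] (a b : M) :
    ∏ i, (if p i then a else b) = a ^ #{i | p i} * b ^ (Fintype.card ι - #{i | p i}) := by
  rw [prod_ite, prod_const, prod_const, ← card_univ,
    ← card_filter_add_card_filter_not (s := univ) p]
  simp

theorem sum_ite_card_eq_choose_mul_pow_mul_pow {ι R : Type*} [Fintype ι] [DecidableEq ι]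
    [CommSemiring R] (k : ℕ) (a b : R) :
    (∑ y : ι → ZMod 2, if #{i | y i = 1} = k then ∏ i, (if y i = 1 then a else b) else 0)
      = (Fintype.card ι).choose k * a ^ k * b ^ (Fintype.card ι - k) := by
  rw [← sum_filter,
    sum_congr rfl fun y hy => by rw [prod_ite_eq_pow_mul_pow, (mem_filter.1 hy).2],
    sum_const, card_filter_card_filter_eq_one, nsmul_eq_mul, mul_assoc]

/-- Robbins' stepwise bound makes `log s_n - 1/(12n)` increasing, and its limit is `log √π`. -/
theorem stirlingSeq_le_sqrt_pi_mul_exp {n : ℕ} (hn : n ≠ 0) :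
    stirlingSeq n ≤ √π * exp (1 / (12 * n)) := by
  obtain ⟨m, rfl⟩ := Nat.exists_eq_add_one_of_ne_zero hn
  let f : ℕ → ℝ := fun k => log (stirlingSeq (k + 1)) - 1 / ((k : ℝ) + 1) / 12
  have hmono : Monotone f := monotone_nat_of_le_succ fun k => by
    have hstep := log_stirlingSeq_sdiff_le (k + 1)
    have htelescope : (1 : ℝ) / (12 * (k + 1 : ℕ) * ((k + 1 : ℕ) + 1))
        = 1 / ((k : ℝ) + 1) / 12 - 1 / ((k + 1 : ℕ) + 1) / 12 := by
      push_cast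
      field_simp
      ring
    simp only [f]
    linarith
  have hlim : Tendsto f atTop (𝓝 (log √π - 0 / 12)) :=
    ((continuousAt_log (by positivity)).tendsto.comp
      (tendsto_stirlingSeq_sqrt_pi.comp (tendsto_add_atTop_nat 1))).sub
      (tendsto_one_div_add_atTop_nhds_zero_nat.div_const 12)
  have hle := hmono.ge_of_tendsto hlim m
  simp only [f] at hle
  rw [← log_le_log_iff (stirlingSeq'_pos m) (by positivity),
    log_mul (by positivity) (by positivity), log_exp]
  push_cast
  rw [mul_comm, ← div_div]
  linarith

theorem stirlingSeq_mul_stirlingSeq_le {a b : ℕ} (ha : a ≠ 0) (hb : b ≠ 0) (hab : 4 ≤ a + b) :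
    stirlingSeq a * stirlingSeq b ≤ 2 * stirlingSeq (a + b) := by
  have hab' : 3 * (a + b) ≤ 4 * a * b := by
    rcases Nat.lt_or_ge a 2 with h | h
    · obtain rfl : a = 1 := by omega
      omega
    rcases Nat.lt_or_ge b 2 with h' | h'
    · obtain rfl : b = 1 := by omega
      omega
    nlinarith
  have hexp : 1 / (12 * (a : ℝ)) + 1 / (12 * b) ≤ 1 / 9 := by
    have : (0 : ℝ) < a := by positivity
    have : (0 : ℝ) < b := by positivity
    rw [div_add_div _ _ (by positivity) (by positivity),
      div_le_div_iff₀ (by positivity) (by norm_num)]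
    have := (Nat.cast_le (α := ℝ)).2 hab'
    push_cast at this
    nlinarith
  have hpi : √π ≤ 16 / 9 := by
    rw [sqrt_le_left (by norm_num)]
    linarith [pi_lt_d2]
  calc stirlingSeq a * stirlingSeq b
      ≤ (√π * exp (1 / (12 * a))) * (√π * exp (1 / (12 * b))) :=
        mul_le_mul (stirlingSeq_le_sqrt_pi_mul_exp ha) (stirlingSeq_le_sqrt_pi_mul_exp hb)
          (sqrt_pi_le_stirlingSeq hb |>.trans' (by positivity)) (by positivity)
    _ = √π * √π * exp (1 / (12 * a) + 1 / (12 * b)) := by rw [exp_add]; ring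
    _ ≤ √π * √π * (9 / 8) := by
        gcongr
        calc _ ≤ exp (1 / 9) := exp_le_exp.2 hexp
          _ ≤ 1 / (1 - 1 / 9) := exp_bound_div_one_sub_of_interval (by norm_num) (by norm_num)
          _ = 9 / 8 := by norm_num
    _ ≤ 2 * √π := by nlinarith [sqrt_nonneg π]
    _ ≤ 2 * stirlingSeq (a + b) := by gcongr; exact sqrt_pi_le_stirlingSeq (by omega)

theorem choose_mul_pow_mul_pow_eq_stirlingSeq {a b : ℕ} (ha : a ≠ 0) (hb : b ≠ 0) :
    ((a + b).choose a : ℝ) * (a / (a + b : ℝ)) ^ a * (b / (a + b : ℝ)) ^ b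
      = stirlingSeq (a + b) / (stirlingSeq a * stirlingSeq b) * √((a + b) / (2 * a * b)) := by
  have : (0 : ℝ) < a := by positivity
  have : (0 : ℝ) < b := by positivity
  have hpow : (a / (a + b : ℝ)) ^ a * (b / (a + b : ℝ)) ^ b
      = (a / exp 1) ^ a * (b / exp 1) ^ b / ((a + b : ℝ) / exp 1) ^ (a + b) := by
    rw [eq_div_iff (by positivity), pow_add, mul_mul_mul_comm, ← mul_pow, ← mul_pow]
    congr 2 <;> field_simp
  have hsqrt : √((a + b) / (2 * a * b)) = √(2 * (a + b)) / (√(2 * a) * √(2 * b)) := by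
    rw [← sqrt_mul (by positivity), ← sqrt_div' _ (by positivity)]
    congr 1
    field_simp
  rw [mul_assoc, hpow, hsqrt, Nat.cast_choose ℝ (Nat.le_add_right a b), Nat.add_sub_cancel_left]
  simp only [stirlingSeq]
  push_cast
  field_simp

theorem sqrt_le_choose_mul_pow_mul_pow {a b : ℕ} (ha : a ≠ 0) (hb : b ≠ 0) :
    √((a + b : ℝ) / (8 * a * b))
      ≤ ((a + b).choose a : ℝ) * (a / (a + b : ℝ)) ^ a * (b / (a + b : ℝ)) ^ b := by
  rcases Nat.lt_or_ge (a + b) 4 with hab | hab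
  · obtain ⟨rfl, rfl⟩ | ⟨rfl, rfl⟩ | ⟨rfl, rfl⟩ :
        (a = 1 ∧ b = 1) ∨ (a = 1 ∧ b = 2) ∨ (a = 2 ∧ b = 1) := by
      omega
    all_goals rw [sqrt_le_iff]; norm_num [Nat.choose]
  have hsa := (sqrt_pos.2 pi_pos).trans_le (sqrt_pi_le_stirlingSeq ha)
  have hsb := (sqrt_pos.2 pi_pos).trans_le (sqrt_pi_le_stirlingSeq hb)
  have hhalf : 1 / 2 ≤ stirlingSeq (a + b) / (stirlingSeq a * stirlingSeq b) := by
    rw [le_div_iff₀ (by positivity)]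
    linarith [stirlingSeq_mul_stirlingSeq_le ha hb hab]
  have hsqrt : √((a + b : ℝ) / (8 * a * b)) = 1 / 2 * √((a + b) / (2 * a * b)) := by
    rw [show (a + b : ℝ) / (8 * a * b) = (1 / 2) ^ 2 * ((a + b) / (2 * a * b)) by ring,
      sqrt_mul (by positivity), sqrt_sq (by positivity)]
  rw [choose_mul_pow_mul_pow_eq_stirlingSeq ha hb, hsqrt]
  gcongr

/-- For `y` a vector of `n` i.i.d. Bernoulli(w/n) bits with `1 ≤ w ≤ n-1`,
`Pr(|y| = w) = C(n,w)(w/n)^w (1-w/n)^(n-w) ≥ sqrt(n/(8w(n-w)))`. -/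
theorem stmt_6 (n w : ℕ) (hw1 : 1 ≤ w) (hwn : w ≤ n - 1) :
    (∑ y : Fin n → ZMod 2,
      if (Finset.univ.filter fun i => y i = 1).card = w
      then ∏ i, (if y i = 1 then (w : ℝ) / n else 1 - (w : ℝ) / n) else 0)
      = (n.choose w : ℝ) * ((w : ℝ) / n) ^ w * (1 - (w : ℝ) / n) ^ (n - w)
    ∧ Real.sqrt ((n : ℝ) / (8 * w * (n - w)))
      ≤ (n.choose w : ℝ) * ((w : ℝ) / n) ^ w * (1 - (w : ℝ) / n) ^ (n - w) := by
  refine ⟨by simpa using sum_ite_card_eq_choose_mul_pow_mul_pow (ι := Fin n) w _ _, ?_⟩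
  obtain ⟨b, rfl⟩ := Nat.exists_eq_add_of_le (show w ≤ n by omega)
  have hb : b ≠ 0 := by omega
  have hcomp : 1 - (w : ℝ) / (w + b) = b / (w + b) := by
    field_simp
    ring
  push_cast
  rw [Nat.add_sub_cancel_left, add_sub_cancel_left, hcomp]
  exact sqrt_le_choose_mul_pow_mul_pow (by omega) hb
end

section
/- Let H be a random m×n binary matrix drawn uniformly from a finite set of matrices 𝓗, let V be a random vector in F_2^n independent of H, let α ∈ (1,2), t ∈ {0,...,n}, ν_t the volume of the Hamming ball of radius t, and Γ(0,t) the union of Hamming balls of radius t around 0 and around the all-ones vector. Then 2^{(α-1) D_α(P_{HV,H} || U_{F_2^m} × P_H)} ≤ 2 ν_t 2^{(α-1)(m − H_α(P_V))} + (2^m Σ_{v ∉ Γ(0,t)} Pr(Hv = 0) (P_V * P_V)(v))^{α-1}. -/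
/-- Hamming weight of a binary vector. -/
def wt {n : ℕ} (v : Fin n → ZMod 2) : ℕ :=
  (Finset.univ.filter fun j => v j = 1).card

/-!
Write `q_H` for the law of `HV` given `H`. The Rényi sum on the left equals
`2^{m(α-1)} 𝔼_H ∑_u q_H(u)^α`, and `∑_u q_H(u)^α = ∑_v P_V(v) q_H(Hv)^{α-1}`. The fibre mass
`q_H(Hv) = ∑_{Hw = 0} P_V(w + v)` splits into the part with `w ∈ Γ(0,t)` and the rest. By
subadditivity of `x ↦ x^{α-1}` the near part contributes at most
`∑_{w ∈ Γ(0,t)} ∑_v P_V(v) P_V(w + v)^{α-1}`, and Young's inequality bounds each inner sum by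
`∑_v P_V(v)^α = 2^{-(α-1) H_α(P_V)}`; there are at most `2 ν_t` such `w`. For the far part,
concavity of `x ↦ x^{α-1}` (Jensen over `H` and `V`) moves the exponent outside the expectation,
and the expected far mass is exactly `∑_{w ∉ Γ(0,t)} Pr(Hw = 0) (P_V * P_V)(w)`.
-/

open Finset

namespace Real

theorem rpow_sum_le_sum_rpow {ι : Type*} (s : Finset ι) {f : ι → ℝ} (hf : ∀ i ∈ s, 0 ≤ f i)
    {p : ℝ} (hp0 : 0 < p) (hp1 : p ≤ 1) :
    (∑ i ∈ s, f i) ^ p ≤ ∑ i ∈ s, f i ^ p := by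
  induction s using Finset.cons_induction with
  | empty => simp [zero_rpow hp0.ne']
  | cons i s hi ih =>
    rw [sum_cons, sum_cons]
    have hs : ∀ j ∈ s, 0 ≤ f j := fun j hj => hf j (mem_cons_of_mem hj)
    calc (f i + ∑ j ∈ s, f j) ^ p ≤ f i ^ p + (∑ j ∈ s, f j) ^ p :=
          rpow_add_le_add_rpow (hf i (mem_cons_self i s)) (sum_nonneg hs) hp0.le hp1
      _ ≤ f i ^ p + ∑ j ∈ s, f j ^ p := by gcongr; exact ih hs

theorem sum_mul_rpow_le_rpow_sum_mul {ι : Type*} (s : Finset ι) {w z : ι → ℝ}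
    (hw : ∀ i ∈ s, 0 ≤ w i) (hw1 : ∑ i ∈ s, w i = 1) (hz : ∀ i ∈ s, 0 ≤ z i)
    {p : ℝ} (hp0 : 0 ≤ p) (hp1 : p ≤ 1) :
    ∑ i ∈ s, w i * z i ^ p ≤ (∑ i ∈ s, w i * z i) ^ p :=
  (concaveOn_rpow hp0 hp1).le_map_sum hw hw1 hz

theorem mul_rpow_mul_mul_rpow_one_sub {c q r : ℝ} (hc : 0 < c) (hq : 0 ≤ q) (hr : 0 ≤ r)
    (a : ℝ) : (c * q) ^ a * (r * c) ^ (1 - a) = c * r ^ (1 - a) * q ^ a := by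
  rw [mul_rpow hc.le hq, mul_rpow hr hc.le]
  have hc1 : c ^ a * c ^ (1 - a) = c := by rw [← rpow_add hc, add_sub_cancel, rpow_one]
  linear_combination (r ^ (1 - a) * q ^ a) * hc1

end Real

theorem sum_mul_translate_rpow_sub_one_le {G : Type*} [AddGroup G] [Fintype G] {p : G → ℝ}
    (hp : ∀ v, 0 ≤ p v) {a : ℝ} (ha : 1 < a) (w : G) :
    ∑ v, p v * p (w + v) ^ (a - 1) ≤ ∑ v, p v ^ a := by
  have hpq := Real.HolderConjugate.conjExponent ha
  have hpow : ∀ v, (p (w + v) ^ (a - 1)) ^ a.conjExponent = p (w + v) ^ a := fun v => by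
    rw [← Real.rpow_mul (hp _), Real.conjExponent, mul_div_cancel₀ _ (by linarith)]
  have htranslate : ∑ v, p (w + v) ^ a = ∑ v, p v ^ a :=
    Equiv.sum_comp (Equiv.addLeft w) (fun v => p v ^ a)
  calc ∑ v, p v * p (w + v) ^ (a - 1)
      ≤ ∑ v, (p v ^ a / a + (p (w + v) ^ (a - 1)) ^ a.conjExponent / a.conjExponent) :=
        sum_le_sum fun v _ =>
          Real.young_inequality_of_nonneg (hp v) (Real.rpow_nonneg (hp _) _) hpq
    _ = (∑ v, p v ^ a) * (a⁻¹ + a.conjExponent⁻¹) := by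
        simp only [hpow, sum_add_distrib, ← sum_div, htranslate]; ring
    _ = ∑ v, p v ^ a := by rw [hpq.inv_add_inv_eq_one, mul_one]

theorem sum_rpow_pos_of_sum_eq_one {α : Type*} [Fintype α] {p : α → ℝ} (hp : ∀ x, 0 ≤ p x)
    (hp1 : ∑ x, p x = 1) (a : ℝ) : 0 < ∑ x, p x ^ a := by
  obtain ⟨x, -, hx⟩ := exists_lt_of_sum_lt (s := univ) (f := fun _ => (0 : ℝ)) (g := p)
    (by simp [hp1])
  exact sum_pos' (fun y _ => Real.rpow_nonneg (hp y) a) ⟨x, mem_univ x, Real.rpow_pos_of_pos hx a⟩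

section Fiber

variable {G M : Type*} [Fintype G] [DecidableEq M]

def fiberMass (f : G → M) (p : G → ℝ) (u : M) : ℝ :=
  ∑ v, if f v = u then p v else 0

variable {p : G → ℝ}

theorem fiberMass_nonneg (hp : ∀ v, 0 ≤ p v) (f : G → M) (u : M) : 0 ≤ fiberMass f p u :=
  sum_nonneg fun v _ => by split_ifs <;> simp [hp v]

theorem sum_fiberMass [Fintype M] (f : G → M) :
    ∑ u, fiberMass f p u = ∑ v, p v := by
  unfold fiberMass
  rw [sum_comm]
  simp

theorem sum_fiberMass_rpow_eq [Fintype M] (hp : ∀ v, 0 ≤ p v) (f : G → M) {a : ℝ} (ha : a ≠ 0) :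
    ∑ u, fiberMass f p u ^ a = ∑ v, p v * fiberMass f p (f v) ^ (a - 1) := by
  have hsplit : ∀ u, fiberMass f p u ^ a = fiberMass f p u * fiberMass f p u ^ (a - 1) :=
    fun u => by
      rw [← Real.rpow_one_add' (fiberMass_nonneg hp f u) (by simpa using ha), add_sub_cancel]
  simp only [hsplit]
  unfold fiberMass
  simp only [sum_mul, ite_mul, zero_mul]
  rw [sum_comm]
  simp

end Fiber

section Kernel

variable {G M : Type*} [AddGroup G] [Fintype G] [AddGroup M] [DecidableEq M] {p : G → ℝ}

theorem fiberMass_apply_eq_sum_ker (f : G →+ M) (v : G) :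
    fiberMass f p (f v) = ∑ w, if f w = 0 then p (w + v) else 0 := by
  unfold fiberMass
  rw [← Equiv.sum_comp (Equiv.addRight v)]
  simp [map_add]

def farMass (f : G → M) (P : G → Prop) [DecidablePred P] (p : G → ℝ) (v : G) : ℝ :=
  ∑ w ∈ univ.filter (fun w => ¬ P w), if f w = 0 then p (w + v) else 0

theorem farMass_nonneg (hp : ∀ v, 0 ≤ p v) (f : G → M) (P : G → Prop) [DecidablePred P] (v : G) :
    0 ≤ farMass f P p v :=
  sum_nonneg fun w _ => by split_ifs <;> simp [hp]

theorem fiberMass_apply_rpow_le (hp : ∀ v, 0 ≤ p v) (f : G →+ M) (P : G → Prop) [DecidablePred P]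
    {b : ℝ} (hb0 : 0 < b) (hb1 : b ≤ 1) (v : G) :
    fiberMass f p (f v) ^ b
      ≤ ∑ w ∈ univ.filter P, p (w + v) ^ b + farMass f P p v ^ b := by
  have hterm : ∀ w, 0 ≤ (if f w = 0 then p (w + v) else 0) := fun w => by
    split_ifs <;> simp [hp]
  rw [fiberMass_apply_eq_sum_ker, ← sum_filter_add_sum_filter_not univ P]
  refine (Real.rpow_add_le_add_rpow (sum_nonneg fun w _ => hterm w)
    (farMass_nonneg hp f P v) hb0.le hb1).trans (add_le_add_left ?_ _)
  refine (Real.rpow_sum_le_sum_rpow _ (fun w _ => hterm w) hb0 hb1).trans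
    (sum_le_sum fun w _ => Real.rpow_le_rpow (hterm w) ?_ hb0.le)
  split_ifs <;> simp [hp]

theorem sum_fiberMass_rpow_le [Fintype M] (hp : ∀ v, 0 ≤ p v) (f : G →+ M) (P : G → Prop)
    [DecidablePred P] {a : ℝ} (ha1 : 1 < a) (ha2 : a ≤ 2) :
    ∑ u, fiberMass f p u ^ a
      ≤ #(univ.filter P) * ∑ v, p v ^ a + ∑ v, p v * farMass f P p v ^ (a - 1) := by
  have hb0 : 0 < a - 1 := by linarith
  have hb1 : a - 1 ≤ 1 := by linarith
  have hnear : ∑ v, p v * ∑ w ∈ univ.filter P, p (w + v) ^ (a - 1)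
      ≤ #(univ.filter P) * ∑ v, p v ^ a := by
    calc ∑ v, p v * ∑ w ∈ univ.filter P, p (w + v) ^ (a - 1)
        = ∑ w ∈ univ.filter P, ∑ v, p v * p (w + v) ^ (a - 1) := by
          simp_rw [mul_sum]; exact sum_comm
      _ ≤ ∑ _w ∈ univ.filter P, ∑ v, p v ^ a :=
          sum_le_sum fun w _ => sum_mul_translate_rpow_sub_one_le hp ha1 w
      _ = #(univ.filter P) * ∑ v, p v ^ a := by rw [sum_const, nsmul_eq_mul]
  calc ∑ u, fiberMass f p u ^ a
      = ∑ v, p v * fiberMass f p (f v) ^ (a - 1) :=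
        sum_fiberMass_rpow_eq hp f (by linarith)
    _ ≤ ∑ v, p v * (∑ w ∈ univ.filter P, p (w + v) ^ (a - 1) + farMass f P p v ^ (a - 1)) :=
        sum_le_sum fun v _ =>
          mul_le_mul_of_nonneg_left (fiberMass_apply_rpow_le hp f P hb0 hb1 v) (hp v)
    _ ≤ _ := by
        simp only [mul_add, sum_add_distrib]
        exact add_le_add_left hnear _

end Kernel

section Average

variable {ι G M : Type*} [AddGroup G] [Fintype G] [AddGroup M] [DecidableEq M] {p : G → ℝ}

theorem sum_sum_mul_farMass (Hs : Finset ι) (φ : ι → G →+ M) (P : G → Prop)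
    [DecidablePred P] :
    ∑ A ∈ Hs, ∑ v, p v * farMass (φ A) P p v
      = ∑ w ∈ univ.filter (fun w => ¬ P w),
          #(Hs.filter fun A => φ A w = 0) * ∑ v, p v * p (w + v) := by
  have hA : ∀ A w, ∑ v, p v * (if φ A w = 0 then p (w + v) else 0)
      = if φ A w = 0 then ∑ v, p v * p (w + v) else 0 := fun A w => by
    split_ifs <;> simp
  unfold farMass
  calc ∑ A ∈ Hs, ∑ v, p v * ∑ w ∈ univ.filter (fun w => ¬ P w),
        (if φ A w = 0 then p (w + v) else 0)
      = ∑ w ∈ univ.filter (fun w => ¬ P w), ∑ A ∈ Hs,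
          ∑ v, p v * (if φ A w = 0 then p (w + v) else 0) := by
        simp_rw [mul_sum]
        exact (sum_congr rfl fun A _ => sum_comm).trans sum_comm
    _ = _ := by
        simp only [hA, ← sum_filter, sum_const, nsmul_eq_mul]

theorem sum_sum_fiberMass_rpow_div_card_le [Fintype M] (hp : ∀ v, 0 ≤ p v)
    (hp1 : ∑ v, p v = 1) (Hs : Finset ι) (hHs : Hs.Nonempty) (φ : ι → G →+ M)
    (P : G → Prop) [DecidablePred P] {a : ℝ} (ha1 : 1 < a) (ha2 : a ≤ 2) :
    (∑ A ∈ Hs, ∑ u, fiberMass (φ A) p u ^ a) / #Hs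
      ≤ #(univ.filter P) * ∑ v, p v ^ a
        + (∑ w ∈ univ.filter (fun w => ¬ P w),
            (#(Hs.filter fun A => φ A w = 0) / #Hs) * ∑ v, p v * p (w + v)) ^ (a - 1) := by
  have hcard : (0 : ℝ) < #Hs := by exact_mod_cast hHs.card_pos
  have hjensen : (∑ A ∈ Hs, ∑ v, p v * farMass (φ A) P p v ^ (a - 1)) / #Hs
      ≤ ((∑ A ∈ Hs, ∑ v, p v * farMass (φ A) P p v) / #Hs) ^ (a - 1) := by
    have h := Real.sum_mul_rpow_le_rpow_sum_mul (Hs ×ˢ univ) (w := fun x => p x.2 / #Hs)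
      (z := fun x => farMass (φ x.1) P p x.2) (fun x _ => div_nonneg (hp _) hcard.le)
      (by rw [sum_product]; simp [← sum_div, hp1, hcard.ne'])
      (fun x _ => farMass_nonneg hp _ P _) (by linarith : 0 ≤ a - 1) (by linarith)
    simpa only [sum_product, sum_div, div_mul_eq_mul_div] using h
  calc (∑ A ∈ Hs, ∑ u, fiberMass (φ A) p u ^ a) / #Hs
      ≤ (∑ A ∈ Hs, (#(univ.filter P) * ∑ v, p v ^ a
          + ∑ v, p v * farMass (φ A) P p v ^ (a - 1))) / #Hs := by
        gcongr with A
        exact sum_fiberMass_rpow_le hp (φ A) P ha1 ha2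
    _ = #(univ.filter P) * ∑ v, p v ^ a
          + (∑ A ∈ Hs, ∑ v, p v * farMass (φ A) P p v ^ (a - 1)) / #Hs := by
        rw [sum_add_distrib, sum_const, nsmul_eq_mul, add_div, mul_div_cancel_left₀ _ hcard.ne']
    _ ≤ _ := by
        grw [hjensen, sum_sum_mul_farMass, sum_div]
        simp only [div_mul_eq_mul_div]
        rfl

end Average

section Hamming

theorem wt_add_one {n : ℕ} (v : Fin n → ZMod 2) : wt (v + 1) = n - wt v := by
  have hflip : ∀ x : ZMod 2, x + 1 = 1 ↔ ¬ x = 1 := by decide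
  have h := card_filter_add_card_filter_not (s := (univ : Finset (Fin n))) (fun j => v j = 1)
  simp only [card_univ, Fintype.card_fin] at h
  simp only [wt, Pi.add_apply, Pi.one_apply, hflip]
  omega

theorem card_wt_le_le (n t : ℕ) :
    #(univ.filter fun v : Fin n → ZMod 2 => wt v ≤ t) ≤ ∑ i ∈ range (t + 1), n.choose i := by
  have hbinary : ∀ x y : ZMod 2, (x = 1 ↔ y = 1) → x = y := by decide
  calc #(univ.filter fun v : Fin n → ZMod 2 => wt v ≤ t)
      ≤ #((range (t + 1)).biUnion fun i => powersetCard i (univ : Finset (Fin n))) := by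
        refine card_le_card_of_injOn (fun v => univ.filter fun j => v j = 1) ?_ ?_
        · intro v hv
          simp only [coe_filter, mem_univ, true_and, Set.mem_ofPred_eq] at hv
          simpa [mem_biUnion, mem_powersetCard, wt, Nat.lt_succ_iff] using hv
        · intro v _ w _ hvw
          funext j
          exact hbinary _ _ (by simpa using congrArg (j ∈ ·) hvw)
    _ ≤ ∑ i ∈ range (t + 1), #(powersetCard i (univ : Finset (Fin n))) := card_biUnion_le
    _ = ∑ i ∈ range (t + 1), n.choose i := by simp [card_powersetCard]

theorem card_wt_le_or_le (n t : ℕ) :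
    #(univ.filter fun v : Fin n → ZMod 2 => wt v ≤ t ∨ n - wt v ≤ t)
      ≤ 2 * ∑ i ∈ range (t + 1), n.choose i := by
  have hcomplement : #(univ.filter fun v : Fin n → ZMod 2 => n - wt v ≤ t)
      ≤ #(univ.filter fun v : Fin n → ZMod 2 => wt v ≤ t) := by
    refine card_le_card_of_injOn (· + 1) (fun v hv => ?_) (add_left_injective 1).injOn
    simpa [wt_add_one] using hv
  rw [filter_or]
  have := card_wt_le_le n t
  have := card_union_le (univ.filter fun v : Fin n → ZMod 2 => wt v ≤ t)
    (univ.filter fun v : Fin n → ZMod 2 => n - wt v ≤ t)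
  omega

end Hamming

theorem sum_rpow_mul_rpow_one_sub_of_uniform {ι M : Type*} [Fintype ι] [DecidableEq ι] [Fintype M]
    (Hs : Finset ι) (q : ι → M → ℝ) (hq : ∀ A u, 0 ≤ q A u) {a r : ℝ} (ha : a ≠ 0)
    (hr : 0 ≤ r) (P Q : M × ι → ℝ)
    (hP : ∀ u A, P (u, A) = if A ∈ Hs then 1 / (#Hs : ℝ) * q A u else 0)
    (hQ : ∀ u A, Q (u, A) = r * (if A ∈ Hs then 1 / (#Hs : ℝ) else 0)) :
    ∑ x, P x ^ a * Q x ^ (1 - a) = r ^ (1 - a) * ((∑ A ∈ Hs, ∑ u, q A u ^ a) / #Hs) := by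
  have hterm : ∀ u A, P (u, A) ^ a * Q (u, A) ^ (1 - a)
      = if A ∈ Hs then 1 / (#Hs : ℝ) * r ^ (1 - a) * q A u ^ a else 0 := by
    intro u A
    rw [hP, hQ]
    split_ifs with hA
    · have : (0 : ℝ) < #Hs := by exact_mod_cast card_pos.2 ⟨A, hA⟩
      exact Real.mul_rpow_mul_mul_rpow_one_sub (by positivity) (hq A u) hr a
    · simp [Real.zero_rpow ha]
  rw [Fintype.sum_prod_type_right]
  simp only [hterm]
  rw [sum_comm]
  simp only [sum_ite_mem, univ_inter]
  rw [sum_comm]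
  simp only [mul_assoc, ← mul_sum]
  ring

theorem two_rpow_mul_sub_one_div_mul_logb {a K : ℝ} (ha : a ≠ 1) (hK : 0 < K) (m : ℕ) :
    (2 : ℝ) ^ ((a - 1) * ((m : ℝ) - 1 / (1 - a) * Real.logb 2 K))
      = ((2 : ℝ) ^ m) ^ (a - 1) * K := by
  have hexp : (a - 1) * ((m : ℝ) - 1 / (1 - a) * Real.logb 2 K) = m * (a - 1) + Real.logb 2 K := by
    field_simp [sub_ne_zero.2 ha.symm]
    ring
  rw [hexp, Real.rpow_add two_pos, Real.rpow_mul zero_le_two, Real.rpow_natCast,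
    Real.rpow_logb two_pos (by norm_num) hK]

theorem stmt_12_general (n m t : ℕ) (a : ℝ) (ha1 : 1 < a) (ha2 : a < 2)
    (Hs : Finset (Matrix (Fin m) (Fin n) (ZMod 2))) (hHs : Hs.Nonempty)
    (pV : (Fin n → ZMod 2) → ℝ) (hV0 : ∀ v, 0 ≤ pV v) (hV1 : ∑ v, pV v = 1)
    (Pjoint : (Fin m → ZMod 2) × Matrix (Fin m) (Fin n) (ZMod 2) → ℝ)
    (hPjoint : ∀ u A, Pjoint (u, A) =
      if A ∈ Hs then (1 / (Hs.card : ℝ)) * ∑ v, (if A.mulVec v = u then pV v else 0) else 0)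
    (Q : (Fin m → ZMod 2) × Matrix (Fin m) (Fin n) (ZMod 2) → ℝ)
    (hQ : ∀ u A, Q (u, A) =
      (1 / (2 ^ m : ℝ)) * (if A ∈ Hs then 1 / (Hs.card : ℝ) else 0))
    (Dα : ℝ) (hD : Dα = (1 / (a - 1)) * Real.logb 2 (∑ x, Pjoint x ^ a * Q x ^ (1 - a)))
    (Hα : ℝ) (hH : Hα = (1 / (1 - a)) * Real.logb 2 (∑ v, pV v ^ a))
    (ν : ℕ) (hν : ν = ∑ i ∈ Finset.range (t + 1), n.choose i) :
    (2 : ℝ) ^ ((a - 1) * Dα)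
      ≤ 2 * ν * (2 : ℝ) ^ ((a - 1) * ((m : ℝ) - Hα))
        + ((2 ^ m : ℝ) * ∑ v ∈ Finset.univ.filter
              (fun v : Fin n → ZMod 2 => ¬(wt v ≤ t ∨ n - wt v ≤ t)),
            ((Hs.filter fun A => A.mulVec v = 0).card / (Hs.card : ℝ))
              * ∑ v', pV v' * pV (v + v')) ^ (a - 1) := by
  set φ : Matrix (Fin m) (Fin n) (ZMod 2) → (Fin n → ZMod 2) →+ (Fin m → ZMod 2) :=
    fun A => A.mulVecLin.toAddMonoidHom
  set F := (∑ A ∈ Hs, ∑ u, fiberMass (φ A) pV u ^ a) / #Hs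
  set X := ∑ v ∈ Finset.univ.filter (fun v : Fin n → ZMod 2 => ¬(wt v ≤ t ∨ n - wt v ≤ t)),
    ((Hs.filter fun A => A.mulVec v = 0).card / (Hs.card : ℝ)) * ∑ v', pV v' * pV (v + v')
  set E := ((2 : ℝ) ^ m) ^ (a - 1)
  have hS : ∑ x, Pjoint x ^ a * Q x ^ (1 - a) = E * F := by
    rw [sum_rpow_mul_rpow_one_sub_of_uniform Hs (fun A => fiberMass (φ A) pV)
      (fun A => fiberMass_nonneg hV0 (φ A)) (by positivity) (by positivity) Pjoint Q hPjoint hQ]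
    rw [one_div, Real.inv_rpow (by positivity), ← Real.rpow_neg (by positivity), neg_sub]
  have hF : 0 < F := div_pos (sum_pos (fun A _ => sum_rpow_pos_of_sum_eq_one
      (fiberMass_nonneg hV0 _) ((sum_fiberMass _).trans hV1) a) hHs)
    (by exact_mod_cast hHs.card_pos)
  have hLHS : (2 : ℝ) ^ ((a - 1) * Dα) = E * F := by
    rw [hD, hS, ← mul_assoc, mul_one_div_cancel (by linarith), one_mul,
      Real.rpow_logb (by norm_num) (by norm_num) (by positivity)]
  have hRHS : (2 : ℝ) ^ ((a - 1) * ((m : ℝ) - Hα)) = E * ∑ v, pV v ^ a := by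
    rw [hH]
    exact two_rpow_mul_sub_one_div_mul_logb (by linarith) (sum_rpow_pos_of_sum_eq_one hV0 hV1 a) m
  have hX : 0 ≤ X := sum_nonneg fun v _ => mul_nonneg (by positivity)
    (sum_nonneg fun v' _ => mul_nonneg (hV0 _) (hV0 _))
  have hbound : F ≤ #(univ.filter fun v : Fin n → ZMod 2 => wt v ≤ t ∨ n - wt v ≤ t)
      * ∑ v, pV v ^ a + X ^ (a - 1) :=
    sum_sum_fiberMass_rpow_div_card_le hV0 hV1 Hs hHs φ _ ha1 ha2.le
  have hΓ : (#(univ.filter fun v : Fin n → ZMod 2 => wt v ≤ t ∨ n - wt v ≤ t) : ℝ) ≤ 2 * ν := by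
    exact_mod_cast hν ▸ card_wt_le_or_le n t
  have hK : 0 ≤ ∑ v, pV v ^ a := sum_nonneg fun v _ => Real.rpow_nonneg (hV0 v) a
  rw [hLHS, hRHS, Real.mul_rpow (by positivity) hX]
  calc E * F ≤ E * (2 * ν * ∑ v, pV v ^ a + X ^ (a - 1)) := by
        gcongr
        linarith [mul_le_mul_of_nonneg_right hΓ hK]
    _ = 2 * ν * (E * ∑ v, pV v ^ a) + E * X ^ (a - 1) := by ring

/-- Main smoothing bound: for `H` uniform on a set `𝓗` of `m × n` binary matrices, `V`
independent of `H`, `α ∈ (1,2)` and `t ≤ n`,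
`2^{(α-1) D_α(P_{HV,H} ‖ U × P_H)} ≤ 2 ν_t 2^{(α-1)(m − H_α(P_V))}
  + (2^m ∑_{v ∉ Γ(0,t)} Pr(Hv = 0) (P_V * P_V)(v))^{α-1}`. -/
theorem stmt_12 (n m t : ℕ) (ht : t ≤ n) (a : ℝ) (ha1 : 1 < a) (ha2 : a < 2)
    (Hs : Finset (Matrix (Fin m) (Fin n) (ZMod 2))) (hHs : Hs.Nonempty)
    (pV : (Fin n → ZMod 2) → ℝ) (hV0 : ∀ v, 0 ≤ pV v) (hV1 : ∑ v, pV v = 1)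
    (Pjoint : (Fin m → ZMod 2) × Matrix (Fin m) (Fin n) (ZMod 2) → ℝ)
    (hPjoint : ∀ u A, Pjoint (u, A) =
      if A ∈ Hs then (1 / (Hs.card : ℝ)) * ∑ v, (if A.mulVec v = u then pV v else 0) else 0)
    (Q : (Fin m → ZMod 2) × Matrix (Fin m) (Fin n) (ZMod 2) → ℝ)
    (hQ : ∀ u A, Q (u, A) =
      (1 / (2 ^ m : ℝ)) * (if A ∈ Hs then 1 / (Hs.card : ℝ) else 0))
    (Dα : ℝ) (hD : Dα = (1 / (a - 1)) * Real.logb 2 (∑ x, Pjoint x ^ a * Q x ^ (1 - a)))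
    (Hα : ℝ) (hH : Hα = (1 / (1 - a)) * Real.logb 2 (∑ v, pV v ^ a))
    (ν : ℕ) (hν : ν = ∑ i ∈ Finset.range (t + 1), n.choose i) :
    (2 : ℝ) ^ ((a - 1) * Dα)
      ≤ 2 * ν * (2 : ℝ) ^ ((a - 1) * ((m : ℝ) - Hα))
        + ((2 ^ m : ℝ) * ∑ v ∈ Finset.univ.filter
              (fun v : Fin n → ZMod 2 => ¬(wt v ≤ t ∨ n - wt v ≤ t)),
            ((Hs.filter fun A => A.mulVec v = 0).card / (Hs.card : ℝ))
              * ∑ v', pV v' * pV (v + v')) ^ (a - 1) :=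
  stmt_12_general n m t a ha1 ha2 Hs hHs pV hV0 hV1 Pjoint hPjoint Q hQ Dα hD Hα hH ν hν
end
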